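/- For a fixed monomial order, every nonzero ideal I ⊆ k[X_1,...,X_m] has a unique reduced Groebner basis, i.e., a Groebner basis G such that every element of G is monic and, for each p ∈ G, no monomial of p lies in the ideal generated by the leading terms of G \ {p}. -/

import Mathlib

open MvPolynomial

variable {σ K : Type*}

/-- The leading (multidegree) exponent of a polynomial with respect to a monomial order:
the maximum, for the order, of the exponents appearing in `f`. -/
noncomputable def leadExp [Field K] (m : MonomialOrder σ) (f : MvPolynomial σ K) :
    σ →₀ ℕ :=
  m.toSyn.symm (f.support.sup fun d => m.toSyn d)

/-- The leading term of a polynomial with respect to a monomial order. -/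
noncomputable def leadTerm [Field K] (m : MonomialOrder σ) (f : MvPolynomial σ K) :
    MvPolynomial σ K :=
  monomial (leadExp m f) (f.coeff (leadExp m f))

/-- `G` is a Groebner basis of the ideal `I` for the monomial order `m`:
a finite subset of `I` whose leading terms generate the same ideal as the leading
terms of all (nonzero) elements of `I`. -/
def IsGroebnerBasis [Field K] (m : MonomialOrder σ) (I : Ideal (MvPolynomial σ K))
    (G : Set (MvPolynomial σ K)) : Prop :=
  G.Finite ∧ G ⊆ (I : Set (MvPolynomial σ K)) ∧
    Ideal.span (leadTerm m '' G) =
      Ideal.span (leadTerm m '' {f | f ∈ I ∧ f ≠ 0})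

/-- `r` is a remainder of `f` on division by `G` (relative to the ideal `I`):
`f - r ∈ I` and no monomial of `r` is divisible by the leading monomial of any
nonzero element of `G`. -/
def IsRemainder [Field K] (m : MonomialOrder σ) (I : Ideal (MvPolynomial σ K))
    (G : Set (MvPolynomial σ K)) (f r : MvPolynomial σ K) : Prop :=
  f - r ∈ I ∧
    ∀ c ∈ r.support, ∀ g ∈ G, g ≠ 0 → ¬ leadExp m g ≤ c

/-- A Groebner basis is reduced if all its elements are monic and no monomial of an
element `p` lies in the ideal generated by the leading terms of the other elements. -/
def IsReducedGB [Field K] (m : MonomialOrder σ) (G : Set (MvPolynomial σ K)) : Prop :=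
  ∀ p ∈ G, p.coeff (leadExp m p) = 1 ∧
    ∀ c ∈ p.support, (monomial c (1 : K)) ∉ Ideal.span (leadTerm m '' (G \ {p}))

/-! Uniqueness: for reduced bases `G`, `G'` and `p ∈ G`, some `q ∈ G'` has the same (necessarily
minimal) leading exponent, and if `p ≠ q` the leading exponent of `p - q ∈ I` would be a
non-leading monomial of `p` or of `q` dominating a leading exponent of `I`, which reducedness
forbids.

Existence: by Dickson's lemma the leading exponents of `I` have finitely many minimal elements.
For each such `e`, dividing `X^e` by all nonzero elements of `I` leaves a remainder `r` none of
whose monomials dominates a leading exponent of `I`; the polynomials `X^e - r` form the reduced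
basis. -/

open MonomialOrder

section
variable [Field K] {m : MonomialOrder σ}

lemma leadExp_eq_degree : leadExp (K := K) m = m.degree := rfl

lemma leadTerm_eq_leadingTerm : leadTerm (K := K) m = m.leadingTerm := rfl

lemma mem_span_leadingTerm_iff {T : Set (MvPolynomial σ K)} {f : MvPolynomial σ K} :
    f ∈ Ideal.span (m.leadingTerm '' T) ↔ ∀ c ∈ f.support, ∃ g ∈ T, g ≠ 0 ∧ m.degree g ≤ c := by
  rw [span_leadingTerm_eq_span_monomial', ← Set.image_image (fun d => monomial d (1 : K)),
    mem_ideal_span_monomial_image]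
  simp [and_assoc]

lemma monomial_one_mem_span_leadingTerm_iff {T : Set (MvPolynomial σ K)} {c : σ →₀ ℕ} :
    monomial c (1 : K) ∈ Ideal.span (m.leadingTerm '' T) ↔ ∃ g ∈ T, g ≠ 0 ∧ m.degree g ≤ c := by
  classical
  simp [mem_span_leadingTerm_iff, support_monomial]

lemma exists_isRemainder (I : Ideal (MvPolynomial σ K)) (f : MvPolynomial σ K) :
    ∃ r, IsRemainder m I I f r := by
  obtain ⟨g, r, hf, -, hr⟩ := m.div_set (B := {b | b ∈ I ∧ b ≠ 0})
    (fun b hb => isUnit_leadingCoeff.mpr hb.2) f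
  refine ⟨r, ?_, fun c hc b hb hb0 => hr c hc b ⟨hb, hb0⟩⟩
  rw [hf, add_sub_cancel_right]
  refine (Ideal.span_le.mpr fun b hb => hb.1 : Ideal.span {b | b ∈ I ∧ b ≠ 0} ≤ I) ?_
  have hrange := Finsupp.range_linearCombination (MvPolynomial σ K)
    (v := (Subtype.val : {b | b ∈ I ∧ b ≠ 0} → MvPolynomial σ K))
  rw [Subtype.range_coe] at hrange
  exact (hrange ▸ LinearMap.mem_range_self _ g : _ ∈ Submodule.span _ _)
end

section
variable [Field K] {m : MonomialOrder σ} {I : Ideal (MvPolynomial σ K)} {G : Set (MvPolynomial σ K)}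

lemma isGroebnerBasis_iff : IsGroebnerBasis m I G ↔ G.Finite ∧ G ⊆ I ∧
    ∀ f ∈ I, f ≠ 0 → ∃ g ∈ G, g ≠ 0 ∧ m.degree g ≤ m.degree f := by
  rw [IsGroebnerBasis, leadTerm_eq_leadingTerm]
  refine and_congr_right fun _ => and_congr_right fun hGI => ⟨fun h f hf hf0 => ?_, fun h => ?_⟩
  · have hmem : m.leadingTerm f ∈ Ideal.span (m.leadingTerm '' G) :=
      h ▸ Ideal.subset_span ⟨f, ⟨hf, hf0⟩, rfl⟩
    exact mem_span_leadingTerm_iff.mp hmem _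
      (m.degree_leadingTerm f ▸ degree_mem_support ((leadingTerm_eq_zero_iff f).not.mpr hf0))
  · refine le_antisymm (Ideal.span_le.mpr ?_) (Ideal.span_le.mpr ?_)
    · rintro _ ⟨g, hg, rfl⟩
      rcases eq_or_ne g 0 with rfl | hg0
      · simp
      · exact Ideal.subset_span ⟨g, ⟨hGI hg, hg0⟩, rfl⟩
    · rintro _ ⟨f, ⟨hf, hf0⟩, rfl⟩
      refine mem_span_leadingTerm_iff.mpr fun c hc => ?_
      obtain ⟨g, hg, hg0, hle⟩ := h f hf hf0
      exact ⟨g, hg, hg0, Finset.mem_singleton.mp (support_monomial_subset hc) ▸ hle⟩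

lemma isReducedGB_iff : IsReducedGB m G ↔ ∀ p ∈ G, m.Monic p ∧
    ∀ c ∈ p.support, ∀ g ∈ G, g ≠ 0 → m.degree g ≤ c → g = p := by
  simp only [IsReducedGB, leadExp_eq_degree, leadTerm_eq_leadingTerm,
    monomial_one_mem_span_leadingTerm_iff]
  refine forall₂_congr fun p _ => and_congr Iff.rfl <| forall₂_congr fun c _ => ?_
  simp only [Set.mem_sdiff, Set.mem_singleton_iff, not_exists, not_and]
  exact forall_congr' fun g => by tauto

lemma degree_le_degree_of_mem_support (hG : IsGroebnerBasis m I G) (hR : IsReducedGB m G)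
    {p f : MvPolynomial σ K} {c : σ →₀ ℕ} (hp : p ∈ G) (hc : c ∈ p.support) (hf : f ∈ I)
    (hf0 : f ≠ 0) (hle : m.degree f ≤ c) : m.degree p ≤ m.degree f := by
  obtain ⟨g, hg, hg0, hgf⟩ := (isGroebnerBasis_iff.mp hG).2.2 f hf hf0
  rwa [← (isReducedGB_iff.mp hR p hp).2 c hc g hg hg0 (hgf.trans hle)]

lemma subset_of_isReducedGB {G' : Set (MvPolynomial σ K)}
    (hG : IsGroebnerBasis m I G) (hR : IsReducedGB m G)
    (hG' : IsGroebnerBasis m I G') (hR' : IsReducedGB m G') : G ⊆ G' := by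
  classical
  intro p hp
  have hpm := (isReducedGB_iff.mp hR p hp).1
  have hpI := (isGroebnerBasis_iff.mp hG).2.1 hp
  obtain ⟨q, hq, hq0, hqp⟩ := (isGroebnerBasis_iff.mp hG').2.2 p hpI hpm.ne_zero
  have hqm := (isReducedGB_iff.mp hR' q hq).1
  have hqI := (isGroebnerBasis_iff.mp hG').2.1 hq
  have hdeg : m.degree q = m.degree p := le_antisymm hqp
    (degree_le_degree_of_mem_support hG hR hp (degree_mem_support hpm.ne_zero) hqI hq0 hqp)
  suffices p = q from this ▸ hq
  by_contra hpq
  have hpq0 : p - q ≠ 0 := sub_ne_zero.mpr hpq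
  have hd := degree_mem_support (m := m) hpq0
  have hle : m.degree p ≤ m.degree (p - q) := by
    rcases Finset.mem_union.mp (support_sub σ p q hd) with h | h
    · exact degree_le_degree_of_mem_support hG hR hp h (sub_mem hpI hqI) hpq0 le_rfl
    · exact hdeg ▸ degree_le_degree_of_mem_support hG' hR' hq h (sub_mem hpI hqI) hpq0 le_rfl
  have heq : m.degree (p - q) = m.degree p := m.toSyn.injective <| le_antisymm
    (degree_sub_le.trans (by rw [hdeg, sup_idem])) (m.toSyn_monotone hle)
  rw [heq, mem_support_iff, coeff_sub, hpm.coeff_degree, ← hdeg, hqm.coeff_degree, sub_self] at hd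
  exact hd rfl

lemma exists_monic_mem_degree_eq {e : σ →₀ ℕ} (he : e ∈ m.degree '' {f | f ∈ I ∧ f ≠ 0}) :
    ∃ p ∈ I, m.Monic p ∧ m.degree p = e ∧
      ∀ c ∈ p.support, c ≠ e → ∀ g ∈ I, g ≠ 0 → ¬ m.degree g ≤ c := by
  classical
  obtain ⟨f, ⟨hf, hf0⟩, rfl⟩ := he
  obtain ⟨r, hrI, hr⟩ := exists_isRemainder (m := m) I (monomial (m.degree f) 1)
  rw [leadExp_eq_degree] at hr
  set p := monomial (m.degree f) (1 : K) - r
  have htail : ∀ c ∈ p.support, c ≠ m.degree f → c ∈ r.support := by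
    intro c hc hcf
    rcases Finset.mem_union.mp (support_sub σ _ r hc) with h | h
    · exact absurd (Finset.mem_singleton.mp (support_monomial_subset h)) hcf
    · exact h
  have hcoeff : p.coeff (m.degree f) = 1 := by
    rw [coeff_sub, coeff_monomial, if_pos rfl,
      notMem_support_iff.mp fun h => hr _ h f hf hf0 le_rfl, sub_zero]
  have hp0 : p ≠ 0 := fun h => by simp [h] at hcoeff
  -- `m.degree p` is a leading exponent of `I`, so it cannot be a monomial of `r`
  have hdeg : m.degree p = m.degree f := by
    by_contra hne
    exact hr _ (htail _ (degree_mem_support hp0) hne) p hrI hp0 le_rfl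
  refine ⟨p, hrI, ?_, hdeg, fun c hc hcf => hr c (htail c hc hcf)⟩
  rw [Monic, leadingCoeff, hdeg, hcoeff]

lemma exists_isGroebnerBasis_isReducedGB [Finite σ] (m : MonomialOrder σ)
    (I : Ideal (MvPolynomial σ K)) : ∃ G, IsGroebnerBasis m I G ∧ IsReducedGB m G := by
  set E := m.degree '' {f | f ∈ I ∧ f ≠ 0}
  have hfin : {e | Minimal (· ∈ E) e}.Finite :=
    WellQuasiOrderedLE.finite_of_isAntichain (setOfPred_minimal_antichain _)
  have := hfin.to_subtype
  choose p hpI hpm hpdeg hptail using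
    fun e : {e | Minimal (· ∈ E) e} => exists_monic_mem_degree_eq e.2.prop
  refine ⟨Set.range p, isGroebnerBasis_iff.mpr ⟨Set.finite_range p, ?_, ?_⟩,
    isReducedGB_iff.mpr ?_⟩
  · rintro _ ⟨e, rfl⟩
    exact hpI e
  · intro f hf hf0
    obtain ⟨e, hle, hmin⟩ :=
      exists_minimal_le_of_wellFoundedLT (· ∈ E) (m.degree f) ⟨f, ⟨hf, hf0⟩, rfl⟩
    exact ⟨p ⟨e, hmin⟩, ⟨_, rfl⟩, (hpm _).ne_zero, (hpdeg _).symm ▸ hle⟩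
  · rintro _ ⟨e, rfl⟩
    refine ⟨hpm e, ?_⟩
    rintro c hc _ ⟨e', rfl⟩ - hle
    by_cases hce : c = e
    · rw [hpdeg, hce] at hle
      exact congrArg p (Subtype.ext (e.2.eq_of_le e'.2.prop hle))
    · exact absurd hle (hptail e c hc hce _ (hpI e') (hpm e').ne_zero)

end

theorem reduced_groebner_basis_unique_general [Field K] {n : ℕ} (m : MonomialOrder (Fin n))
    (I : Ideal (MvPolynomial (Fin n) K)) :
    ∃! G : Set (MvPolynomial (Fin n) K), IsGroebnerBasis m I G ∧ IsReducedGB m G := by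
  obtain ⟨G, hG⟩ := exists_isGroebnerBasis_isReducedGB m I
  exact ⟨G, hG, fun G' hG' => (subset_of_isReducedGB hG'.1 hG'.2 hG.1 hG.2).antisymm
    (subset_of_isReducedGB hG.1 hG.2 hG'.1 hG'.2)⟩

/-- for a fixed monomial order, every nonzero ideal has a unique
reduced Groebner basis. -/
theorem reduced_groebner_basis_unique [Field K] {n : ℕ} (m : MonomialOrder (Fin n))
    (I : Ideal (MvPolynomial (Fin n) K)) (hI : I ≠ ⊥) :
    ∃! G : Set (MvPolynomial (Fin n) K), IsGroebnerBasis m I G ∧ IsReducedGB m G :=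
  reduced_groebner_basis_unique_general m I
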